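/- arXiv:2507.08337 — 2 statements merged into one kernel-verified Lean document; each statement's English description precedes it below -/
import Mathlib

section
/- Over a field of characteristic zero, if f and g are nonzero binary forms of the same degree d with {f, g} = 0, then f and g are scalar multiples of each other. -/
/-!
Setting `y = 1` loses no information on forms of a fixed degree `d`. Euler's identity
`x f_x + y f_y = d f` eliminates `f_y` and `g_y`, so that `{f, g}` at `y = 1` becomes
`d (F' G - F G')`, where `F`, `G` are the dehomogenizations. In characteristic zero a vanishing
Wronskian forces proportionality: after dividing out `gcd F G`, the coprime quotients have zero
derivatives, so they are constants.
-/

open MvPolynomial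

/-- The first transvectant of two binary forms. -/
noncomputable def transvectant {k : Type*} [CommRing k]
    (f g : MvPolynomial (Fin 2) k) : MvPolynomial (Fin 2) k :=
  pderiv 0 f * pderiv 1 g - pderiv 1 f * pderiv 0 g

namespace MvPolynomial

open Polynomial (derivative wronskian)
open scoped Polynomial

noncomputable def dehomogenize (R : Type*) [CommSemiring R] :
    MvPolynomial (Fin 2) R →ₐ[R] R[X] :=
  aeval ![Polynomial.X, 1]

variable {R : Type*}

section CommSemiring

variable [CommSemiring R]

@[simp]
lemma dehomogenize_X_zero : dehomogenize R (X 0) = Polynomial.X := by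
  simp [dehomogenize]

@[simp]
lemma dehomogenize_X_one : dehomogenize R (X 1) = 1 := by
  simp [dehomogenize]

lemma dehomogenize_monomial (m : Fin 2 →₀ ℕ) (a : R) :
    dehomogenize R (monomial m a) = Polynomial.C a * Polynomial.X ^ m 0 := by
  simp [dehomogenize, aeval_monomial, Finsupp.prod_fintype, Fin.prod_univ_two,
    Polynomial.algebraMap_eq]

lemma IsHomogeneous.exponent_add_eq {f : MvPolynomial (Fin 2) R} {d : ℕ} (hf : f.IsHomogeneous d)
    {m : Fin 2 →₀ ℕ} (hm : coeff m f ≠ 0) : m 0 + m 1 = d := by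
  by_contra hne
  exact hm (hf.coeff_eq_zero (by rwa [Finsupp.degree_eq_sum, Fin.sum_univ_two]))

lemma coeff_dehomogenize {f : MvPolynomial (Fin 2) R} {d : ℕ} (hf : f.IsHomogeneous d)
    {m : Fin 2 →₀ ℕ} (hm : m 0 + m 1 = d) :
    (dehomogenize R f).coeff (m 0) = coeff m f := by
  conv_lhs => rw [f.as_sum, map_sum]
  simp only [dehomogenize_monomial, Polynomial.finsetSum_coeff, Polynomial.coeff_C_mul,
    Polynomial.coeff_X_pow]
  rw [Finset.sum_eq_single m]
  · simp
  · intro u hu hne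
    have hu := hf.exponent_add_eq (mem_support_iff.mp hu)
    have : m 0 ≠ u 0 := fun h0 => hne (Finsupp.ext fun i => by fin_cases i <;> simp <;> omega)
    simp [this]
  · intro hm
    simp [notMem_support_iff.mp hm]

lemma dehomogenize_injOn (d : ℕ) :
    Set.InjOn (dehomogenize R) {f : MvPolynomial (Fin 2) R | f.IsHomogeneous d} := by
  intro f hf g hg hfg
  ext m
  by_cases hm : m 0 + m 1 = d
  · rw [← coeff_dehomogenize hf hm, ← coeff_dehomogenize hg hm, hfg]
  · rw [not_imp_comm.mp hf.exponent_add_eq hm,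
      not_imp_comm.mp hg.exponent_add_eq hm]

end CommSemiring

section CommRing

variable [CommRing R]

lemma derivative_dehomogenize (f : MvPolynomial (Fin 2) R) :
    derivative (dehomogenize R f) = dehomogenize R (pderiv 0 f) := by
  induction f using MvPolynomial.induction_on with
  | C a => simp [dehomogenize]
  | add p q hp hq => simp [hp, hq]
  | mul_X p i hp =>
    fin_cases i <;> simp [Polynomial.derivative_mul, hp, mul_comm]

/-- Euler's identity `x f_x + y f_y = d f`, read at `y = 1`. -/
lemma dehomogenize_pderiv_one {f : MvPolynomial (Fin 2) R} {d : ℕ} (hf : f.IsHomogeneous d) :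
    dehomogenize R (pderiv 1 f) =
      d • dehomogenize R f - Polynomial.X * derivative (dehomogenize R f) := by
  have := congrArg (dehomogenize R) hf.sum_X_mul_pderiv
  simp only [Fin.sum_univ_two, map_add, map_mul, map_nsmul, dehomogenize_X_zero,
    dehomogenize_X_one, ← derivative_dehomogenize] at this
  rw [← this]
  ring

end CommRing

lemma wronskian_dehomogenize_eq_zero [CommRing R] [IsDomain R] [CharZero R]
    {f g : MvPolynomial (Fin 2) R} {d : ℕ}
    (hf : f.IsHomogeneous d) (hg : g.IsHomogeneous d) (h : transvectant f g = 0) :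
    wronskian (dehomogenize R f) (dehomogenize R g) = 0 := by
  rcases eq_or_ne d 0 with rfl | hd
  · rw [← totalDegree_zero_iff_isHomogeneous, totalDegree_eq_zero_iff_eq_C] at hf hg
    rw [hf, hg]
    simp [wronskian, dehomogenize]
  · have hdW : (d : R[X]) * wronskian (dehomogenize R f) (dehomogenize R g) = 0 := by
      have := congrArg (dehomogenize R) h
      simp only [transvectant, map_sub, map_mul, map_zero, dehomogenize_pderiv_one hf,
        dehomogenize_pderiv_one hg, ← derivative_dehomogenize] at this
      rw [nsmul_eq_mul, nsmul_eq_mul] at this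
      rw [wronskian]
      linear_combination -this
    exact (mul_eq_zero.mp hdW).resolve_left (Nat.cast_ne_zero.mpr hd)

end MvPolynomial

namespace Polynomial

variable {K : Type*} [Field K] [CharZero K]

lemma exists_eq_smul_of_wronskian_eq_zero {F G : K[X]} (hF : F ≠ 0) (hW : wronskian F G = 0) :
    ∃ c : K, G = c • F := by
  classical
  obtain ⟨F', G', hF', hG', hunit⟩ := extract_gcd F G
  set D := gcd F G
  have hD : D ≠ 0 := fun h0 => hF ((gcd_eq_zero_iff F G).mp h0).1
  have hW' : wronskian F' G' = 0 := by
    have : D * D * wronskian F' G' = 0 := by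
      rw [← hW, hF', hG', wronskian, wronskian, derivative_mul, derivative_mul]
      ring
    exact (mul_eq_zero.mp this).resolve_left (mul_ne_zero hD hD)
  obtain ⟨hF'c, hG'c⟩ := ((gcd_isUnit_iff F' G').mp hunit).wronskian_eq_zero_iff.mp hW'
  rw [eq_C_of_derivative_eq_zero hF'c] at hF'
  rw [eq_C_of_derivative_eq_zero hG'c] at hG'
  have ha : F'.coeff 0 ≠ 0 := fun h0 => hF (by simp [hF', h0])
  refine ⟨G'.coeff 0 / F'.coeff 0, ?_⟩
  rw [hF', hG', smul_eq_C_mul, mul_left_comm, ← C_mul, div_mul_cancel₀ _ ha]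

end Polynomial

theorem transvectant_eq_zero_same_degree_general {K : Type*} [Field K]
    [CharZero K] (d : ℕ) (f g : MvPolynomial (Fin 2) K)
    (hf : f.IsHomogeneous d) (hg : g.IsHomogeneous d)
    (hf0 : f ≠ 0) (hg0 : g ≠ 0) (h : transvectant f g = 0) :
    ∃ c : K, c ≠ 0 ∧ g = c • f := by
  have hF0 : dehomogenize K f ≠ 0 := fun h0 =>
    hf0 (dehomogenize_injOn d hf (isHomogeneous_zero _ _ d) (h0.trans (map_zero _).symm))
  obtain ⟨c, hc⟩ := Polynomial.exists_eq_smul_of_wronskian_eq_zero hF0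
    (wronskian_dehomogenize_eq_zero hf hg h)
  have hgf : g = c • f := by
    have hcf : (c • f).IsHomogeneous d := by simpa [smul_eq_C_mul] using hf.C_mul c
    exact dehomogenize_injOn d hg hcf (by rw [hc, map_smul])
  exact ⟨c, fun hc0 => hg0 (by rw [hgf, hc0, zero_smul]), hgf⟩

/-- Over an algebraically closed field of characteristic zero, if `f` and `g` are
nonzero binary forms of the same degree `d` with `{f, g} = 0`, then `f` and `g`
are scalar multiples of each other. -/
theorem transvectant_eq_zero_same_degree {K : Type*} [Field K] [IsAlgClosed K]
    [CharZero K] (d : ℕ) (f g : MvPolynomial (Fin 2) K)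
    (hf : f.IsHomogeneous d) (hg : g.IsHomogeneous d)
    (hf0 : f ≠ 0) (hg0 : g ≠ 0) (h : transvectant f g = 0) :
    ∃ c : K, c ≠ 0 ∧ g = c • f :=
  transvectant_eq_zero_same_degree_general d f g hf hg hf0 hg0 h
end

section
/- Over an algebraically closed field of characteristic zero, if f and g are nonzero binary forms of degrees m and n respectively with {f, g} = 0, then there exist a binary form h of degree gcd(m, n) and nonzero scalars c₁, c₂ such that f = c₁·h^(m/gcd(m,n)) and g = c₂·h^(n/gcd(m,n)). -/
open MvPolynomial

namespace TransvectantAux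

open MvPolynomial


variable {K : Type*} [Field K] {σ : Type*}

/-- Grading map into `Polynomial` recording homogeneous components. -/
noncomputable def gr : MvPolynomial σ K →+* Polynomial (MvPolynomial σ K) :=
  (aeval (R := K) (fun i : σ => Polynomial.C (MvPolynomial.X i) * Polynomial.X)).toRingHom

lemma gr_monomial (d : σ →₀ ℕ) (c : K) :
    gr (monomial d c) = Polynomial.C (monomial d c) * Polynomial.X ^ (Finsupp.degree d) := by
  classical
  simp only [gr, AlgHom.toRingHom_eq_coe, RingHom.coe_coe, aeval_monomial]
  have h1 : (d.prod fun i k => (Polynomial.C (MvPolynomial.X (R := K) i) * Polynomial.X) ^ k)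
      = Polynomial.C (d.prod fun i k => (MvPolynomial.X (R := K) i) ^ k) *
        Polynomial.X ^ (Finsupp.degree d) := by
    simp only [Finsupp.prod, Finsupp.degree_apply]
    rw [← Finset.prod_pow_eq_pow_sum, map_prod, ← Finset.prod_mul_distrib]
    exact Finset.prod_congr rfl fun i _ => by rw [mul_pow, Polynomial.C_pow]
  rw [h1, monomial_eq, map_mul]
  have : algebraMap K (Polynomial (MvPolynomial σ K)) c = Polynomial.C (MvPolynomial.C c) := rfl
  rw [this]
  ring

lemma coeff_gr (φ : MvPolynomial σ K) (k : ℕ) :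
    (gr φ).coeff k = homogeneousComponent k φ := by
  classical
  conv_lhs => rw [φ.as_sum]
  conv_rhs => rw [φ.as_sum]
  rw [map_sum, Polynomial.finset_sum_coeff, map_sum]
  refine Finset.sum_congr rfl fun d _ => ?_
  rw [gr_monomial, Polynomial.coeff_C_mul, Polynomial.coeff_X_pow]
  classical
  ext e
  rw [coeff_homogeneousComponent]
  rcases eq_or_ne d e with rfl | hde
  · simp [apply_ite (coeff d), coeff_monomial, eq_comm]
  · simp [apply_ite (coeff e), coeff_monomial, hde]

lemma gr_of_isHomogeneous {φ : MvPolynomial σ K} {n : ℕ} (h : φ.IsHomogeneous n) :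
    gr φ = Polynomial.C φ * Polynomial.X ^ n := by
  ext k
  rw [coeff_gr, Polynomial.coeff_C_mul, Polynomial.coeff_X_pow,
    homogeneousComponent_of_mem ((mem_homogeneousSubmodule n φ).2 h)]
  by_cases hk : n = k <;> simp [hk, eq_comm]

lemma gr_ne_zero {φ : MvPolynomial σ K} (h : φ ≠ 0) : gr φ ≠ 0 := by
  intro h0
  apply h
  have : ∀ k, homogeneousComponent k φ = 0 := fun k => by
    rw [← coeff_gr, h0, Polynomial.coeff_zero]
  rw [← sum_homogeneousComponent φ]
  exact Finset.sum_eq_zero fun k _ => this k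

/-- Factors of a nonzero homogeneous polynomial are homogeneous. -/
lemma isHomogeneous_of_mul {a b : MvPolynomial σ K} {n : ℕ}
    (ha : a ≠ 0) (hb : b ≠ 0) (h : (a * b).IsHomogeneous n) :
    ∃ p q : ℕ, p + q = n ∧ a.IsHomogeneous p ∧ b.IsHomogeneous q := by
  classical
  have hab : a * b ≠ 0 := mul_ne_zero ha hb
  have hga : gr a ≠ 0 := gr_ne_zero ha
  have hgb : gr b ≠ 0 := gr_ne_zero hb
  have hmul : gr a * gr b = Polynomial.C (a * b) * Polynomial.X ^ n := by
    rw [← map_mul, gr_of_isHomogeneous h]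
  have hd : (gr a).natDegree + (gr b).natDegree = n := by
    rw [← Polynomial.natDegree_mul hga hgb, hmul, Polynomial.C_mul_X_pow_eq_monomial,
      Polynomial.natDegree_monomial, if_neg hab]
  have ht : (gr a).natTrailingDegree + (gr b).natTrailingDegree = n := by
    rw [← Polynomial.natTrailingDegree_mul hga hgb, hmul, Polynomial.C_mul_X_pow_eq_monomial,
      Polynomial.natTrailingDegree_monomial hab]
  have hta := Polynomial.natTrailingDegree_le_natDegree (p := gr a)
  have htb := Polynomial.natTrailingDegree_le_natDegree (p := gr b)
  have hea : (gr a).natTrailingDegree = (gr a).natDegree := by omega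
  have heb : (gr b).natTrailingDegree = (gr b).natDegree := by omega
  have key : ∀ (c : MvPolynomial σ K), c ≠ 0 →
      (gr c).natTrailingDegree = (gr c).natDegree → c.IsHomogeneous (gr c).natDegree := by
    intro c hc he d hcd
    have h1 : (gr c).coeff (Finsupp.degree d) ≠ 0 := by
      rw [coeff_gr]
      intro h0
      apply hcd
      have := coeff_homogeneousComponent (n := Finsupp.degree d) (φ := c) d
      rw [h0] at this
      simpa using this.symm
    have h2 := Polynomial.le_natDegree_of_ne_zero h1
    have h3 := Polynomial.natTrailingDegree_le_of_ne_zero h1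
    rw [show (Finsupp.weight 1 : (_ →₀ ℕ) →+ ℕ) = Finsupp.degree from Finsupp.degree_eq_weight_one.symm]
    omega
  exact ⟨(gr a).natDegree, (gr b).natDegree, hd, key a ha hea, key b hb heb⟩

lemma isHomogeneous_of_pow {h : MvPolynomial σ K} {s N : ℕ}
    (hh : h ≠ 0) (hs : s ≠ 0) (hp : (h ^ s).IsHomogeneous N) :
    ∃ p : ℕ, p * s = N ∧ h.IsHomogeneous p := by
  obtain ⟨s, rfl⟩ : ∃ k, s = k + 1 := ⟨s - 1, by omega⟩
  have hps : h ^ (s + 1) = h * h ^ s := by ring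
  have hp' := hp
  rw [hps] at hp'
  obtain ⟨p, q, hpq, hhp, -⟩ := isHomogeneous_of_mul hh (pow_ne_zero _ hh) hp'
  exact ⟨p, (hhp.pow (s + 1)).inj_right hp (pow_ne_zero _ hh), hhp⟩


variable {K : Type*} [Field K]

lemma degree_fin2 (d : Fin 2 →₀ ℕ) : Finsupp.degree d = d 0 + d 1 := by
  classical
  rw [Finsupp.degree_apply, Finset.sum_subset (Finset.subset_univ d.support)
    (fun x _ hx => Finsupp.notMem_support_iff.mp hx), Fin.sum_univ_two]

lemma X_mul_pderiv_monomial (i : Fin 2) (d : Fin 2 →₀ ℕ) (c : K) :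
    X i * pderiv i (monomial d c) = monomial d (c * d i) := by
  classical
  rw [pderiv_monomial, X, monomial_mul, one_mul]
  rcases Nat.eq_zero_or_pos (d i) with h | h
  · rw [h]
    norm_num
  · have key : Finsupp.single i 1 + (d - Finsupp.single i 1) = d := by
      ext j
      rw [Finsupp.add_apply, Finsupp.tsub_apply]
      rcases eq_or_ne i j with rfl | hij
      · rw [Finsupp.single_eq_same]; omega
      · rw [Finsupp.single_eq_of_ne' hij]; omega
    rw [key]

lemma euler {N : ℕ} {f : MvPolynomial (Fin 2) K} (hf : f.IsHomogeneous N) :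
    X 0 * pderiv 0 f + X 1 * pderiv 1 f = (N : MvPolynomial (Fin 2) K) * f := by
  classical
  have H : ∀ d ∈ f.support,
      X (0 : Fin 2) * pderiv 0 (monomial d (coeff d f)) +
        X 1 * pderiv 1 (monomial d (coeff d f)) =
      (N : MvPolynomial (Fin 2) K) * monomial d (coeff d f) := by
    intro d hd
    have hdeg : d 0 + d 1 = N := by
      have := hf (mem_support_iff.mp hd)
      rw [show (Finsupp.weight 1 : (_ →₀ ℕ) →+ ℕ) = Finsupp.degree from Finsupp.degree_eq_weight_one.symm] at this
      rw [← degree_fin2 d, this]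
    rw [X_mul_pderiv_monomial, X_mul_pderiv_monomial,
      ← map_natCast (C : K →+* MvPolynomial (Fin 2) K), C_mul_monomial, ← map_add]
    congr 1
    push_cast [← hdeg]
    ring
  calc X 0 * pderiv 0 f + X 1 * pderiv 1 f
      = ∑ d ∈ f.support, (X (0:Fin 2) * pderiv 0 (monomial d (coeff d f)) +
          X 1 * pderiv 1 (monomial d (coeff d f))) := by
        conv_lhs => rw [f.as_sum]
        rw [map_sum, map_sum, Finset.mul_sum, Finset.mul_sum, ← Finset.sum_add_distrib]
    _ = ∑ d ∈ f.support, (N : MvPolynomial (Fin 2) K) * monomial d (coeff d f) :=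
        Finset.sum_congr rfl H
    _ = (N : MvPolynomial (Fin 2) K) * f := by
        rw [← Finset.mul_sum, ← f.as_sum]

lemma isHomogeneous_pderiv {N : ℕ} {f : MvPolynomial (Fin 2) K} (hf : f.IsHomogeneous N)
    (i : Fin 2) : (pderiv i f).IsHomogeneous (N - 1) := by
  classical
  conv_lhs => rw [f.as_sum]
  rw [map_sum]
  apply IsHomogeneous.sum
  intro d hd
  rw [pderiv_monomial]
  rcases Nat.eq_zero_or_pos (d i) with h | h
  · rw [h]; norm_num
    exact isHomogeneous_zero _ _ _
  · apply isHomogeneous_monomial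
    have hdeg : Finsupp.degree d = N := by
      have := hf (mem_support_iff.mp hd); rw [show (Finsupp.weight 1 : (_ →₀ ℕ) →+ ℕ) = Finsupp.degree from Finsupp.degree_eq_weight_one.symm] at this
      exact this
    rw [degree_fin2] at hdeg ⊢
    have hle : ∀ j, (Finsupp.single i 1) j ≤ d j := by
      intro j
      rcases eq_or_ne i j with rfl | hij
      · rw [Finsupp.single_eq_same]; exact h
      · rw [Finsupp.single_eq_of_ne' hij]; exact Nat.zero_le _
    have hs : (Finsupp.single i 1) 0 + (Finsupp.single i 1) 1 = 1 := by
      fin_cases i <;> simp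
    have ht0 := Finsupp.tsub_apply d (Finsupp.single i 1) (0 : Fin 2)
    have ht1 := Finsupp.tsub_apply d (Finsupp.single i 1) (1 : Fin 2)
    have := hle 0
    have := hle 1
    omega

lemma eq_C_of_isHomogeneous_zero {f : MvPolynomial (Fin 2) K} (hf : f.IsHomogeneous 0) :
    f = C (coeff 0 f) := by
  ext m
  rw [coeff_C]
  rcases eq_or_ne (0 : Fin 2 →₀ ℕ) m with rfl | hm
  · simp
  · rw [if_neg hm]
    by_contra hc
    have := hf hc
    rw [show (Finsupp.weight 1 : (_ →₀ ℕ) →+ ℕ) = Finsupp.degree from Finsupp.degree_eq_weight_one.symm] at this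
    rw [Finsupp.degree_eq_zero_iff] at this
    exact hm this.symm

lemma unit_eq_C {u : MvPolynomial (Fin 2) K} (hu : IsUnit u) :
    ∃ c : K, c ≠ 0 ∧ u = C c := by
  obtain ⟨v, hv⟩ := hu.exists_right_inv
  have hu0 : u ≠ 0 := left_ne_zero_of_mul_eq_one hv
  have hv0 : v ≠ 0 := right_ne_zero_of_mul_eq_one hv
  have h1 : (u * v).IsHomogeneous 0 := hv ▸ isHomogeneous_one _ _
  obtain ⟨p, q, hpq, hup, -⟩ := isHomogeneous_of_mul hu0 hv0 h1
  have hp0 : p = 0 := by omega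
  have hu' : u.IsHomogeneous 0 := by rwa [hp0] at hup
  have hC := eq_C_of_isHomogeneous_zero hu'
  refine ⟨coeff 0 u, ?_, hC⟩
  intro h0
  apply hu0
  rw [hC, h0, map_zero]


/-- If the "logarithmic derivative identity" holds for homogeneous `x` relative to a
relatively prime `y`, then `x` is a constant. -/
lemma eq_C_of_rel [CharZero K] {x y : MvPolynomial (Fin 2) K} {k : ℕ}
    (hx : x.IsHomogeneous k) (hx0 : x ≠ 0) (hy0 : y ≠ 0)
    (hrp : IsRelPrime y x)
    (hrel : ∀ i : Fin 2, pderiv i y * x = y * pderiv i x) :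
    ∃ c : K, c ≠ 0 ∧ x = C c := by
  rcases Nat.eq_zero_or_pos k with hk | hk
  · subst hk
    refine ⟨coeff 0 x, ?_, eq_C_of_isHomogeneous_zero hx⟩
    intro h0
    exact hx0 (by rw [eq_C_of_isHomogeneous_zero hx, h0, map_zero])
  · exfalso
    have hpz : ∀ i : Fin 2, pderiv i x = 0 := by
      intro i
      by_contra hne
      have hdvd : x ∣ pderiv i x := by
        refine hrp.symm.dvd_of_dvd_mul_left ?_
        exact ⟨pderiv i y, by linear_combination - hrel i⟩
      obtain ⟨t, ht⟩ := hdvd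
      have ht0 : t ≠ 0 := by rintro rfl; rw [mul_zero] at ht; exact hne ht
      have hhom : (x * t).IsHomogeneous (k - 1) := ht ▸ isHomogeneous_pderiv hx i
      obtain ⟨p, q, hpq, hxp, -⟩ := isHomogeneous_of_mul hx0 ht0 hhom
      have hp : p = k := hxp.inj_right hx hx0
      omega
    have he := euler hx
    rw [hpz 0, hpz 1, mul_zero, mul_zero, add_zero] at he
    have : (k : MvPolynomial (Fin 2) K) ≠ 0 := by
      exact_mod_cast Nat.cast_ne_zero.mpr hk.ne'
    exact hx0 (by
      rcases mul_eq_zero.mp he.symm with h | h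
      · exact absurd h this
      · exact h)

lemma proportional [CharZero K] {u v : MvPolynomial (Fin 2) K} {M N : ℕ}
    (hu : u.IsHomogeneous M) (hv : v.IsHomogeneous N) (hu0 : u ≠ 0) (hv0 : v ≠ 0)
    (hrel : ∀ i : Fin 2, pderiv i u * v = u * pderiv i v) :
    ∃ c : K, c ≠ 0 ∧ u = C c * v := by
  obtain ⟨u', v', w, hrp, huw, hvw⟩ :=
    UniqueFactorizationMonoid.exists_reduced_factors' u v hv0
  have hw0 : w ≠ 0 := fun h => hu0 (by rw [← huw, h, zero_mul])
  have hu'0 : u' ≠ 0 := fun h => hu0 (by rw [← huw, h, mul_zero])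
  have hv'0 : v' ≠ 0 := fun h => hv0 (by rw [← hvw, h, mul_zero])
  obtain ⟨pu, qu, hpqu, -, hu'h⟩ := isHomogeneous_of_mul hw0 hu'0 (huw ▸ hu)
  obtain ⟨pv, qv, hpqv, -, hv'h⟩ := isHomogeneous_of_mul hw0 hv'0 (hvw ▸ hv)
  have hred : ∀ i : Fin 2, pderiv i u' * v' = u' * pderiv i v' := by
    intro i
    have h1 := hrel i
    rw [← huw, ← hvw, pderiv_mul, pderiv_mul] at h1
    have h2 : w * (w * (pderiv i u' * v')) = w * (w * (u' * pderiv i v')) := by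
      linear_combination h1
    exact mul_left_cancel₀ hw0 (mul_left_cancel₀ hw0 h2)
  obtain ⟨cv, hcv0, hcv⟩ := eq_C_of_rel hv'h hv'0 hu'0 hrp hred
  obtain ⟨cu, hcu0, hcu⟩ := eq_C_of_rel hu'h hu'0 hv'0 hrp.symm
    (fun i => by linear_combination - hred i)
  refine ⟨cu * cv⁻¹, mul_ne_zero hcu0 (inv_ne_zero hcv0), ?_⟩
  rw [← huw, ← hvw, hcu, hcv]
  have hcalc : C (cu * cv⁻¹) * (w * C cv) = w * (C (cu * cv⁻¹) * C cv) := by ring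
  rw [hcalc, ← map_mul]
  have : cu * cv⁻¹ * cv = cu := by field_simp
  rw [this]



end TransvectantAux

open TransvectantAux

/-- Over an algebraically closed field of characteristic zero, if `f` and `g` are
nonzero binary forms of degrees `m` and `n` with `{f, g} = 0`, then there exist a
binary form `h` of degree `gcd(m, n)` and nonzero scalars `c₁`, `c₂` such that
`f = c₁ • h ^ (m / gcd(m,n))` and `g = c₂ • h ^ (n / gcd(m,n))`. -/
theorem transvectant_eq_zero_common_power {K : Type*} [Field K] [IsAlgClosed K]
    [CharZero K] (m n : ℕ) (f g : MvPolynomial (Fin 2) K)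
    (hf : f.IsHomogeneous m) (hg : g.IsHomogeneous n)
    (hf0 : f ≠ 0) (hg0 : g ≠ 0) (h : transvectant f g = 0) :
    ∃ (h₀ : MvPolynomial (Fin 2) K) (c₁ c₂ : K),
      h₀.IsHomogeneous (Nat.gcd m n) ∧ c₁ ≠ 0 ∧ c₂ ≠ 0 ∧
      f = c₁ • h₀ ^ (m / Nat.gcd m n) ∧ g = c₂ • h₀ ^ (n / Nat.gcd m n) := by
  classical
  -- degenerate cases
  rcases Nat.eq_zero_or_pos m with hm | hm
  · subst hm
    have hfc := eq_C_of_isHomogeneous_zero hf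
    have hfc0 : coeff 0 f ≠ 0 := fun h0 => hf0 (by rw [hfc, h0, map_zero])
    rcases Nat.eq_zero_or_pos n with hn | hn
    · subst hn
      have hgc := eq_C_of_isHomogeneous_zero hg
      have hgc0 : coeff 0 g ≠ 0 := fun h0 => hg0 (by rw [hgc, h0, map_zero])
      exact ⟨1, coeff 0 f, coeff 0 g, by simpa using isHomogeneous_one (Fin 2) K,
        hfc0, hgc0, by simpa [smul_eq_C_mul] using hfc,
        by simpa [smul_eq_C_mul] using hgc⟩
    · refine ⟨g, coeff 0 f, 1, ?_, hfc0, one_ne_zero, ?_, ?_⟩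
      · simpa using hg
      · simp [Nat.zero_div, smul_eq_C_mul]
        exact hfc
      · simp [Nat.gcd_zero_left, Nat.div_self hn]
  rcases Nat.eq_zero_or_pos n with hn | hn
  · subst hn
    have hgc := eq_C_of_isHomogeneous_zero hg
    have hgc0 : coeff 0 g ≠ 0 := fun h0 => hg0 (by rw [hgc, h0, map_zero])
    refine ⟨f, 1, coeff 0 g, ?_, one_ne_zero, hgc0, ?_, ?_⟩
    · simpa [Nat.gcd_zero_right] using hf
    · simp [Nat.gcd_zero_right, Nat.div_self hm]
    · simp [Nat.gcd_zero_right, Nat.zero_div, smul_eq_C_mul]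
      exact hgc
  -- main case
  have htr : pderiv 0 f * pderiv 1 g = pderiv 1 f * pderiv 0 g := by
    have := sub_eq_zero.mp h
    exact this
  have hEf := euler hf
  have hEg := euler hg
  have E : ∀ i : Fin 2, (m : MvPolynomial (Fin 2) K) * f * pderiv i g
      = (n : MvPolynomial (Fin 2) K) * g * pderiv i f := by
    have E0 : (m : MvPolynomial (Fin 2) K) * f * pderiv 0 g
        = (n : MvPolynomial (Fin 2) K) * g * pderiv 0 f := by
      linear_combination (pderiv 0 f) * hEg - (pderiv 0 g) * hEf - X 1 * htr
    have E1 : (m : MvPolynomial (Fin 2) K) * f * pderiv 1 g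
        = (n : MvPolynomial (Fin 2) K) * g * pderiv 1 f := by
      linear_combination (pderiv 1 f) * hEg - (pderiv 1 g) * hEf + X 0 * htr
    intro i
    fin_cases i
    · exact E0
    · exact E1
  obtain ⟨m1, rfl⟩ : ∃ k, m = k + 1 := ⟨m - 1, by omega⟩
  obtain ⟨n1, rfl⟩ : ∃ k, n = k + 1 := ⟨n - 1, by omega⟩
  set m := m1 + 1 with hmdef
  set n := n1 + 1 with hndef
  have hUV : ∀ i : Fin 2, pderiv i (f ^ n) * g ^ m = f ^ n * pderiv i (g ^ m) := by
    intro i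
    rw [pderiv_pow, pderiv_pow]
    have hE := E i
    push_cast at hE ⊢
    simp only [hmdef, hndef, Nat.add_sub_cancel]
    linear_combination (- (f ^ n1 * g ^ m1)) * hE
  obtain ⟨c, hc0, hc⟩ := proportional (hf.pow n) (hg.pow m)
    (pow_ne_zero _ hf0) (pow_ne_zero _ hg0) hUV
  -- arithmetic setup
  set d := Nat.gcd m n with hddef
  have hd : 0 < d := Nat.gcd_pos_of_pos_left n hm
  set m' := m / d with hm'def
  set n' := n / d with hn'def
  have hmm : d * m' = m := Nat.mul_div_cancel' (Nat.gcd_dvd_left m n)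
  have hnn : d * n' = n := Nat.mul_div_cancel' (Nat.gcd_dvd_right m n)
  have hm'pos : 0 < m' := Nat.pos_of_ne_zero fun h0 => by
    rw [h0, Nat.mul_zero] at hmm; omega
  have hn'pos : 0 < n' := Nat.pos_of_ne_zero fun h0 => by
    rw [h0, Nat.mul_zero] at hnn; omega
  have hcop : Nat.Coprime m' n' := Nat.coprime_div_gcd_div_gcd hd
  -- extract a d-th root of c
  obtain ⟨e, he⟩ := IsAlgClosed.exists_pow_nat_eq c hd
  have he0 : e ≠ 0 := by
    rintro rfl
    rw [zero_pow hd.ne'] at he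
    exact hc0 he.symm
  -- pass to the fraction field to extract a root of unity
  set φ : MvPolynomial (Fin 2) K := f ^ n' with hφdef
  set ψ : MvPolynomial (Fin 2) K := C e * g ^ m' with hψdef
  have hφ0 : φ ≠ 0 := pow_ne_zero _ hf0
  have hψ0 : ψ ≠ 0 := mul_ne_zero (fun hC => he0 (by simpa using hC)) (pow_ne_zero _ hg0)
  have hpowdd : φ ^ d = ψ ^ d := by
    rw [hφdef, hψdef, mul_pow, ← map_pow, he, ← pow_mul, ← pow_mul]
    rw [mul_comm n' d, mul_comm m' d, hmm, hnn, hc]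
  obtain ⟨ζ, hζ1, hζφψ⟩ : ∃ ζ : K, ζ ^ d = 1 ∧ φ = C ζ * ψ := by
    set L := FractionRing (MvPolynomial (Fin 2) K)
    set ι : MvPolynomial (Fin 2) K →+* L := algebraMap (MvPolynomial (Fin 2) K) L with hιdef
    have hinj : Function.Injective ι := IsFractionRing.injective (MvPolynomial (Fin 2) K) L
    have hψL : ι ψ ≠ 0 := fun h0 => hψ0 (hinj (by rw [h0, map_zero]))
    set t : L := ι φ / ι ψ with htdef
    have ht : t ^ d = 1 := by
      have hne : ι (ψ ^ d) ≠ 0 := by rw [map_pow]; exact pow_ne_zero _ hψL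
      rw [htdef, div_pow, ← map_pow, ← map_pow, hpowdd, div_self hne]
    set j : K →+* L := ι.comp (C : K →+* MvPolynomial (Fin 2) K) with hjdef
    have hjinj : Function.Injective j := j.injective
    set p : Polynomial K := Polynomial.X ^ d - 1 with hpdef
    have hp0 : p ≠ 0 := by
      have := Polynomial.monic_X_pow_sub_C (1 : K) hd.ne'
      exact this.ne_zero
    have hmapp : p.map j = Polynomial.X ^ d - 1 := by
      rw [hpdef, Polynomial.map_sub, Polynomial.map_pow, Polynomial.map_X, Polynomial.map_one]
    have htroot : t ∈ (p.map j).roots := by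
      rw [Polynomial.mem_roots (by
        rw [hmapp]
        have := Polynomial.monic_X_pow_sub_C (1 : L) hd.ne'
        simpa using this.ne_zero)]
      rw [hmapp]
      simp [Polynomial.IsRoot, ht]
    rw [(IsAlgClosed.splits p).roots_map_of_injective hjinj] at htroot
    obtain ⟨ζ, hζroot, hζt⟩ := Multiset.mem_map.mp htroot
    have hζ1 : ζ ^ d = 1 := by
      have h2 := (Polynomial.mem_roots hp0).mp hζroot
      rw [hpdef] at h2
      simp only [Polynomial.IsRoot, Polynomial.eval_sub, Polynomial.eval_pow,
        Polynomial.eval_X, Polynomial.eval_one, sub_eq_zero] at h2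
      exact h2
    refine ⟨ζ, hζ1, hinj ?_⟩
    rw [map_mul]
    have hjζ : ι (C ζ) = j ζ := rfl
    rw [hjζ, hζt, htdef, div_mul_cancel₀ _ hψL]
  -- now  f ^ n' = C a * g ^ m'  with a ≠ 0
  set a := ζ * e with hadef
  have ha0 : a ≠ 0 := mul_ne_zero (fun h0 => by simp [h0, zero_pow hd.ne'] at hζ1) he0
  have hkey : f ^ n' = C a * g ^ m' := by
    rw [hφdef, hψdef] at hζφψ
    rw [hζφψ, hadef, map_mul]
    ring
  -- unique factorization argument
  letI : NormalizationMonoid (MvPolynomial (Fin 2) K) := UniqueFactorizationMonoid.strongNormalizationMonoid.toNormalizationMonoid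
  classical
  set S := UniqueFactorizationMonoid.normalizedFactors f with hSdef
  set T := UniqueFactorizationMonoid.normalizedFactors g with hTdef
  have hunitCa : IsUnit (C a : MvPolynomial (Fin 2) K) := by
    refine isUnit_iff_exists_inv.2 ⟨C a⁻¹, ?_⟩
    rw [← map_mul, mul_inv_cancel₀ ha0, map_one]
  have hassoc : Associated (g ^ m') (f ^ n') :=
    ⟨hunitCa.unit, by rw [IsUnit.unit_spec, mul_comm, ← hkey]⟩
  have hST : n' • S = m' • T := by
    have h1 : UniqueFactorizationMonoid.normalizedFactors (f ^ n') = n' • S := by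
      rw [hSdef, UniqueFactorizationMonoid.normalizedFactors_pow]
    have h2 : UniqueFactorizationMonoid.normalizedFactors (g ^ m') = m' • T := by
      rw [hTdef, UniqueFactorizationMonoid.normalizedFactors_pow]
    rw [← h1, ← h2, hassoc.normalizedFactors_eq]
  have hcount : ∀ x : MvPolynomial (Fin 2) K, n' * S.count x = m' * T.count x := by
    intro x
    have := congrArg (Multiset.count x) hST
    simpa [Multiset.count_nsmul] using this
  have hdvdc : ∀ x : MvPolynomial (Fin 2) K, m' ∣ S.count x := by
    intro x
    have h1 : m' ∣ n' * S.count x := ⟨T.count x, hcount x⟩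
    exact (Nat.Coprime.dvd_of_dvd_mul_left hcop h1)
  set h₀ : MvPolynomial (Fin 2) K := ∏ x ∈ S.toFinset, x ^ (S.count x / m') with hh₀def
  have hSprod : h₀ ^ m' = S.prod := by
    rw [hh₀def, ← Finset.prod_pow, Finset.prod_multiset_count]
    refine Finset.prod_congr rfl fun x _ => ?_
    rw [← pow_mul, Nat.div_mul_cancel (hdvdc x)]
  have hTcount : ∀ x : MvPolynomial (Fin 2) K, T.count x = n' * (S.count x / m') := by
    intro x
    obtain ⟨k, hk⟩ := hdvdc x
    have h1 := hcount x
    rw [hk] at h1 ⊢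
    rw [Nat.mul_div_cancel_left k hm'pos]
    have : m' * T.count x = m' * (n' * k) := by rw [← h1]; ring
    exact Nat.eq_of_mul_eq_mul_left hm'pos this
  have hToFinset : T.toFinset = S.toFinset := by
    ext x
    simp only [Multiset.mem_toFinset, ← Multiset.count_pos]
    have := hcount x
    constructor <;> intro h1 <;> nlinarith [Nat.mul_le_mul_left n' (Nat.one_le_iff_ne_zero.mpr (Nat.pos_iff_ne_zero.mp h1))]
  have hTprod : h₀ ^ n' = T.prod := by
    rw [Finset.prod_multiset_count, hToFinset, hh₀def, ← Finset.prod_pow]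
    refine (Finset.prod_congr rfl fun x _ => ?_).symm
    rw [hTcount x, ← pow_mul, mul_comm n' (S.count x / m'), pow_mul]
  have hfassoc : Associated (h₀ ^ m') f := by
    rw [hSprod]
    exact UniqueFactorizationMonoid.prod_normalizedFactors hf0
  have hgassoc : Associated (h₀ ^ n') g := by
    rw [hTprod]
    exact UniqueFactorizationMonoid.prod_normalizedFactors hg0
  obtain ⟨uf, huf⟩ := hfassoc
  obtain ⟨ug, hug⟩ := hgassoc
  obtain ⟨c₁, hc₁0, hc₁⟩ := unit_eq_C uf.isUnit
  obtain ⟨c₂, hc₂0, hc₂⟩ := unit_eq_C ug.isUnit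
  have hfeq : f = C c₁ * h₀ ^ m' := by rw [← huf, hc₁]; ring
  have hgeq : g = C c₂ * h₀ ^ n' := by rw [← hug, hc₂]; ring
  have hh₀0 : h₀ ≠ 0 := by
    rintro h0
    apply hf0
    rw [hfeq, h0, zero_pow hm'pos.ne', mul_zero]
  have hpowhom : (h₀ ^ m').IsHomogeneous m := by
    have h1 : C c₁⁻¹ * f = h₀ ^ m' := by
      rw [hfeq, ← mul_assoc, ← map_mul, inv_mul_cancel₀ hc₁0, map_one, one_mul]
    rw [← h1]
    exact hf.C_mul _
  obtain ⟨p, hpm, hph⟩ := isHomogeneous_of_pow hh₀0 hm'pos.ne' hpowhom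
  have hpd : p = d := by
    have : p * m' = d * m' := by rw [hpm, ← hmm]
    exact Nat.eq_of_mul_eq_mul_right hm'pos this
  refine ⟨h₀, c₁, c₂, hpd ▸ hph, hc₁0, hc₂0, ?_, ?_⟩
  · rw [smul_eq_C_mul]; exact hfeq
  · rw [smul_eq_C_mul]; exact hgeq
end
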